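/- arXiv:2506.23220 — 7 statements merged into one kernel-verified Lean document; each statement's English description precedes it below -/
import Mathlib

section
/- Let K be a field and f(t, y) ∈ K[t, y] monic in y of degree n such that f(0, y) is square-free. Let Z be the set of roots of f(0, y) in the algebraic closure of K, and for each α ∈ Z let φ_α(t) be the unique power series root of f with φ_α(0) = α. Then f factorizes in K̄⟦t⟧[y] as f(t, y) = ∏_{α ∈ Z} (y − φ_α(t)). -/
open Polynomial PowerSeries

/-- Let `f(t,y) ∈ K[t][y]` be monic in `y` with `f(0,y)` square-free over the
algebraic closure `K̄`, and for each root `α` of `f(0,y)` in `K̄` let `φ α` be the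
power series root of `f` with constant term `α`.  Then `f` factorizes in `K̄⟦t⟧[y]`
as `f(t,y) = ∏_{α ∈ Z} (y - φ_α(t))` where `Z` is the set of roots of `f(0,y)`. -/
theorem power_series_factorization (K : Type*) [Field K]
    (F : Polynomial (Polynomial K)) (hmonic : F.Monic) :
    let Kbar := AlgebraicClosure K
    let F0 : Polynomial Kbar :=
      (F.map (Polynomial.evalRingHom (0 : K))).map (algebraMap K Kbar)
    let τ : Polynomial K →+* PowerSeries Kbar :=
      (Polynomial.coeToPowerSeries.ringHom).comp
        (Polynomial.mapRingHom (algebraMap K Kbar))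
    Squarefree F0 →
      ∀ φ : Kbar → PowerSeries Kbar,
        (∀ α ∈ F0.roots, PowerSeries.constantCoeff (R := Kbar) (φ α) = α
            ∧ (F.map τ).eval (φ α) = 0) →
        F.map τ = (F0.roots.map fun α => Polynomial.X - Polynomial.C (φ α)).prod := by
  intro Kbar F0 τ hsq φ hφ
  classical
  set G : Polynomial (PowerSeries Kbar) := F.map τ with hGdef
  have hGm : G.Monic := hmonic.map τ
  have hG0 : G ≠ 0 := hGm.ne_zero
  have hF0m : F0.Monic := (hmonic.map _).map _
  have hF00 : F0 ≠ 0 := hF0m.ne_zero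
  -- the roots of F0 have no duplicates since F0 is squarefree
  have hnd : F0.roots.Nodup := by
    rw [Multiset.nodup_iff_count_le_one]
    intro a
    rw [count_roots, rootMultiplicity_le_iff hF00]
    intro hdvd
    rw [sq] at hdvd
    exact (Polynomial.not_isUnit_X_sub_C a) (hsq _ hdvd)
  -- number of roots equals degree
  have hcard : Multiset.card F0.roots = F0.natDegree :=
    (Polynomial.splits_iff_card_roots).mp (IsAlgClosed.splits F0)
  have hdeg0 : F0.natDegree = F.natDegree := by
    rw [(hmonic.map (Polynomial.evalRingHom (0 : K))).natDegree_map,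
      hmonic.natDegree_map]
  have hdegG : G.natDegree = F.natDegree := hmonic.natDegree_map τ
  -- the multiset of power series roots
  set s : Multiset (PowerSeries Kbar) := F0.roots.map φ with hsdef
  have hsnd : s.Nodup := by
    refine Multiset.Nodup.map_on ?_ hnd
    intro a ha b hb hab
    rw [← (hφ a ha).1, ← (hφ b hb).1, hab]
  have hsle : s ≤ G.roots := by
    rw [Multiset.le_iff_count]
    intro x
    rcases Nat.eq_zero_or_pos (s.count x) with h | h
    · simp [h]
    · have hx : x ∈ s := Multiset.count_pos.mp h
      have h1 : s.count x ≤ 1 := Multiset.nodup_iff_count_le_one.mp hsnd x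
      have hxr : x ∈ G.roots := by
        rw [mem_roots hG0]
        obtain ⟨b, hb, rfl⟩ := Multiset.mem_map.mp hx
        exact (hφ b hb).2
      exact h1.trans (Multiset.one_le_count_iff_mem.mpr hxr)
  have hdvd : (s.map fun a => Polynomial.X - Polynomial.C a).prod ∣ G :=
    (Multiset.prod_X_sub_C_dvd_iff_le_roots hG0 s).mpr hsle
  have hpm : ((s.map fun a => Polynomial.X - Polynomial.C a).prod).Monic :=
    monic_multiset_prod_of_monic _ _ fun a _ => monic_X_sub_C a
  have hdegs : G.natDegree ≤
      ((s.map fun a => Polynomial.X - Polynomial.C a).prod).natDegree := by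
    rw [natDegree_multiset_prod_X_sub_C_eq_card, hsdef, Multiset.card_map, hcard,
      hdeg0, hdegG]
  have hfinal := eq_leadingCoeff_mul_of_monic_of_dvd_of_natDegree_le hpm hdvd hdegs
  rw [hGm.leadingCoeff, map_one, one_mul] at hfinal
  rw [hfinal, hsdef, Multiset.map_map]
  rfl
end

section
/- Let F be a field of characteristic p > 0, and suppose P(t, y) = (y − φ(t))^{p^ℓ · e} · Q(t, y) in the formal power series ring F⟦t, y⟧, where gcd(p, e) = 1, φ(0) = 0, and Q(0, 0) = α ≠ 0. Then the Hasse derivative of order p^ℓ·e of P with respect to y, evaluated at (0,0), equals α. -/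
open PowerSeries

/-- The Hasse derivative of order `k` of a formal power series: the coefficient-wise
operation with `coeff n (hasseDeriv k P) = (n+k).choose k * coeff (n+k) P`, i.e. the
coefficient of `z^k` in `P(y + z)`. -/
noncomputable def psHasseDeriv {R : Type*} [CommSemiring R] (k : ℕ)
    (P : PowerSeries R) : PowerSeries R :=
  PowerSeries.mk fun n => ((n + k).choose k : ℕ) • PowerSeries.coeff (n + k) P

/-- Let `F` have characteristic `p > 0` and suppose
`P(t,y) = (y − φ(t))^{pˡ·e} · Q(t,y)` in `F⟦t,y⟧` (represented as `F⟦t⟧⟦y⟧`), where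
`gcd(p,e) = 1`, `φ(0) = 0` and `Q(0,0) = α ≠ 0`.  Then the Hasse derivative of order
`pˡ·e` of `P` with respect to `y`, evaluated at `(0,0)`, equals `α`. -/
theorem hasseDeriv_at_origin_eq_cofactor (F : Type*) [Field F] (p : ℕ) [CharP F p]
    (hp : p ≠ 0) (ℓ e : ℕ) (he : 1 ≤ e) (hcop : Nat.Coprime p e)
    (φ : PowerSeries F) (hφ0 : PowerSeries.constantCoeff φ = 0)
    (P Q : PowerSeries (PowerSeries F)) (α : F) (hα : α ≠ 0)
    (hQ : PowerSeries.constantCoeff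
        (PowerSeries.constantCoeff Q) = α)
    (hP : P = (PowerSeries.X - PowerSeries.C φ) ^ (p ^ ℓ * e) * Q) :
    PowerSeries.constantCoeff
        (PowerSeries.constantCoeff (psHasseDeriv (p ^ ℓ * e) P))
      = α := by
  set k := p ^ ℓ * e with hk
  have h1 : PowerSeries.constantCoeff (psHasseDeriv k P)
      = PowerSeries.coeff k P := by
    simp [psHasseDeriv, ← PowerSeries.coeff_zero_eq_constantCoeff]
  rw [h1, ← PowerSeries.coeff_map, hP]
  have hmap : PowerSeries.map (PowerSeries.constantCoeff (R := F))
      ((PowerSeries.X - PowerSeries.C φ) ^ k * Q)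
      = PowerSeries.X ^ k * PowerSeries.map (PowerSeries.constantCoeff (R := F)) Q := by
    rw [map_mul, map_pow, map_sub, PowerSeries.map_X, PowerSeries.map_C, hφ0, map_zero,
      sub_zero]
  rw [hmap]
  have := PowerSeries.coeff_X_pow_mul
    (PowerSeries.map (PowerSeries.constantCoeff (R := F)) Q) k 0
  rw [zero_add] at this
  rw [this]
  simpa using hQ
end

section
/- Let f, g be monic polynomials over a field K with deg f > deg g ≥ 1, and set F(y, z) = f(y) + z·g(y) ∈ K[y, z] (monic in y). Write F(y, z) = gcd(f, g)(y) · F'(y, z). Then for every common root σ of f and g in the algebraic closure of K, F'(σ, z) is a nonzero polynomial in z. -/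
open Polynomial

/-- Let `f, g` be monic with `deg f > deg g ≥ 1`, let `d` be their monic gcd, and
write `F(y,z) = f(y) + z·g(y) = d(y)·F'(y,z)` (in `(K[y])[z]`).  Then for every
common root `σ` of `f` and `g` in the algebraic closure, `F'(σ, z)` is a nonzero
polynomial in `z`. -/
theorem quotient_by_gcd_nonzero_at_common_roots (K : Type*) [Field K]
    (f g d : Polynomial K) (hf : f.Monic) (hg : g.Monic)
    (hdeg : g.natDegree < f.natDegree) (hg1 : 1 ≤ g.natDegree)
    (hd : d.Monic) (hgcd : ∀ q : Polynomial K, (q ∣ f ∧ q ∣ g) ↔ q ∣ d)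
    (F' : Polynomial (Polynomial K))
    (hF : (Polynomial.C f + Polynomial.X * Polynomial.C g
        : Polynomial (Polynomial K)) = Polynomial.C d * F')
    (σ : AlgebraicClosure K)
    (hσf : Polynomial.aeval σ f = 0) (hσg : Polynomial.aeval σ g = 0) :
    F'.map (Polynomial.aeval σ : Polynomial K →ₐ[K] AlgebraicClosure K).toRingHom
      ≠ 0 := by
  intro h0
  have hσint : IsIntegral K σ := ⟨f, hf, hσf⟩
  set μ := minpoly K σ with hμ
  have hμpos : 0 < μ.natDegree := minpoly.natDegree_pos hσint
  have hc0 : f = d * F'.coeff 0 := by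
    have := congrArg (fun p => Polynomial.coeff p 0) hF
    simpa using this
  have hc1 : g = d * F'.coeff 1 := by
    have := congrArg (fun p => Polynomial.coeff p 1) hF
    simpa using this
  have hroot0 : Polynomial.aeval σ (F'.coeff 0) = 0 := by
    have := congrArg (fun p => Polynomial.coeff p 0) h0
    simpa [Polynomial.coeff_map] using this
  have hroot1 : Polynomial.aeval σ (F'.coeff 1) = 0 := by
    have := congrArg (fun p => Polynomial.coeff p 1) h0
    simpa [Polynomial.coeff_map] using this
  have hμ0 : μ ∣ F'.coeff 0 := minpoly.dvd K σ hroot0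
  have hμ1 : μ ∣ F'.coeff 1 := minpoly.dvd K σ hroot1
  have hdvd : d * μ ∣ d := by
    rw [← hgcd]
    exact ⟨by rw [hc0]; exact mul_dvd_mul_left d hμ0,
           by rw [hc1]; exact mul_dvd_mul_left d hμ1⟩
  have hdne : d ≠ 0 := hd.ne_zero
  have hone : μ ∣ 1 := by
    have h : d * μ ∣ d * 1 := by simpa using hdvd
    exact (mul_dvd_mul_iff_left hdne).mp h
  have : μ.natDegree = 0 :=
    Polynomial.natDegree_eq_zero_of_isUnit (isUnit_of_dvd_one hone)
  omega
end

section
/- Let P(t, y) = Σ_{i,j} P_{ij} t^i y^j be a bivariate formal power series over a field F, and define the diagonal operator D(P)(t) = Σ_{i≥0} P_{ii} t^i. Suppose φ(t) ∈ F⟦t⟧ satisfies φ(0) = 0 and P(t, y) = (y − φ(t)) · Q(t, y) with Q(0, 0) ≠ 0. Then φ(t) = D( y² · ∂_y P(ty, y) / P(ty, y) ), where the argument of D is interpreted as a formal power series in F⟦t, y⟧ (the division is valid since the constant term of the relevant denominator is the unit Q(0,0)). -/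
open PowerSeries

/-- The diagonal of a bivariate power series `G(t,y) = ∑ G_{ij} tⁱ yʲ` (represented
as an element of `F⟦t⟧⟦y⟧`, outer variable `y`): `D(G)(t) = ∑ᵢ G_{ii} tⁱ`. -/
noncomputable def psDiagonal {F : Type*} [CommSemiring F]
    (G : PowerSeries (PowerSeries F)) : PowerSeries F :=
  PowerSeries.mk fun i => PowerSeries.coeff (R := F) i (PowerSeries.coeff (R := PowerSeries F) i G)

/-- The substitution `t ↦ t·y` on a bivariate power series:
`(substT G)(t, y) = G(t·y, y)`, i.e. `∑_{ij} G_{ij} tⁱ y^{i+j}`. -/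
noncomputable def psSubstT {F : Type*} [CommSemiring F]
    (G : PowerSeries (PowerSeries F)) : PowerSeries (PowerSeries F) :=
  PowerSeries.mk fun m => PowerSeries.mk fun i =>
    if i ≤ m then PowerSeries.coeff (R := F) i (PowerSeries.coeff (R := PowerSeries F) (m - i) G)
    else 0

section Aux
variable {F : Type*} [Field F]

lemma coeff_substT (G : PowerSeries (PowerSeries F)) (m i : ℕ) :
    PowerSeries.coeff (R := F) i (PowerSeries.coeff (R := PowerSeries F) m (psSubstT G)) =
      if i ≤ m then PowerSeries.coeff (R := F) i (PowerSeries.coeff (R := PowerSeries F) (m - i) G)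
      else 0 := by
  simp [psSubstT]

lemma substT_add (A B : PowerSeries (PowerSeries F)) :
    psSubstT (A + B) = psSubstT A + psSubstT B := by
  ext m i
  simp only [map_add, coeff_substT]
  split <;> simp

lemma substT_sub (A B : PowerSeries (PowerSeries F)) :
    psSubstT (A - B) = psSubstT A - psSubstT B := by
  ext m i
  simp only [map_sub, coeff_substT]
  split <;> simp

lemma substT_X_mul (Q : PowerSeries (PowerSeries F)) :
    psSubstT (PowerSeries.X * Q) = PowerSeries.X * psSubstT Q := by
  have hx : ∀ (f : PowerSeries (PowerSeries F)) (k : ℕ),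
      PowerSeries.coeff (R := PowerSeries F) k (PowerSeries.X * f)
        = if 1 ≤ k then PowerSeries.coeff (R := PowerSeries F) (k - 1) f else 0 := by
    intro f k
    rw [← pow_one (PowerSeries.X : PowerSeries (PowerSeries F)), coeff_X_pow_mul']
  ext m i
  rw [coeff_substT, hx, hx]
  simp only [apply_ite (PowerSeries.coeff (R := F) i), map_zero]
  by_cases h1 : i ≤ m
  · by_cases h2 : 1 ≤ m - i
    · rw [if_pos h1, if_pos h2, if_pos (show 1 ≤ m by omega), coeff_substT,
        if_pos (show i ≤ m - 1 by omega), show m - i - 1 = m - 1 - i from by omega]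
    · rw [if_pos h1, if_neg h2]
      by_cases h3 : 1 ≤ m
      · rw [if_pos h3, coeff_substT, if_neg (by omega)]
      · rw [if_neg h3]
  · rw [if_neg h1]
    by_cases h3 : 1 ≤ m
    · rw [if_pos h3, coeff_substT, if_neg (by omega)]
    · rw [if_neg h3]


open Finset in
lemma substT_C_mul (g : PowerSeries F) (Q : PowerSeries (PowerSeries F)) :
    psSubstT (PowerSeries.C (R := PowerSeries F) g * Q)
      = (PowerSeries.mk fun k => PowerSeries.C (R := F) (PowerSeries.coeff (R := F) k g)
          * PowerSeries.X ^ k) * psSubstT Q := by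
  ext m i
  rw [coeff_substT, PowerSeries.coeff_C_mul]
  conv_rhs => rw [PowerSeries.coeff_mul, map_sum, Finset.Nat.sum_antidiagonal_eq_sum_range_succ_mk]
  simp only [coeff_mk]
  by_cases him : i ≤ m
  · rw [if_pos him, PowerSeries.coeff_mul, Finset.Nat.sum_antidiagonal_eq_sum_range_succ_mk,
      ← Finset.sum_subset (Finset.range_subset_range.mpr (show i + 1 ≤ m + 1 by omega))
        (by
          intro p hp hnp
          simp only [Finset.mem_range] at hp hnp
          rw [mul_assoc, PowerSeries.coeff_C_mul, coeff_X_pow_mul',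
            if_neg (show ¬ p ≤ i by omega), mul_zero])]
    apply Finset.sum_congr rfl
    intro p hp
    simp only [Finset.mem_range] at hp
    rw [mul_assoc, PowerSeries.coeff_C_mul, coeff_X_pow_mul',
      if_pos (show p ≤ i by omega), coeff_substT,
      if_pos (show i - p ≤ m - p by omega),
      show m - p - (i - p) = m - i by omega]
  · rw [if_neg him]
    symm
    apply Finset.sum_eq_zero
    intro p hp
    simp only [Finset.mem_range] at hp
    rw [mul_assoc, PowerSeries.coeff_C_mul, coeff_X_pow_mul']
    by_cases hpi : p ≤ i
    · rw [if_pos hpi, coeff_substT, if_neg (show ¬ i - p ≤ m - p by omega), mul_zero]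
    · rw [if_neg hpi, mul_zero]

/-- `psPsi φ = φ(ty)/y`, i.e. `∑ₘ φ_{m+1} t^{m+1} y^m`. -/
noncomputable def psPsi (φ : PowerSeries F) : PowerSeries (PowerSeries F) :=
  PowerSeries.mk fun m => PowerSeries.C (R := F) (PowerSeries.coeff (R := F) (m + 1) φ)
    * PowerSeries.X ^ (m + 1)

lemma psPhi_eq (φ : PowerSeries F) (hφ0 : PowerSeries.constantCoeff (R := F) φ = 0) :
    (PowerSeries.mk fun k => PowerSeries.C (R := F) (PowerSeries.coeff (R := F) k φ)
      * PowerSeries.X ^ k : PowerSeries (PowerSeries F))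
      = PowerSeries.X * psPsi φ := by
  ext m : 1
  cases m with
  | zero =>
    rw [coeff_mk, ← pow_one (PowerSeries.X : PowerSeries (PowerSeries F)),
      coeff_X_pow_mul', if_neg (by omega)]
    rw [coeff_zero_eq_constantCoeff_apply, hφ0]
    simp
  | succ n =>
    rw [coeff_mk, coeff_succ_X_mul, psPsi, coeff_mk]

lemma substT_lowTri (G : PowerSeries (PowerSeries F)) (m i : ℕ) (h : m < i) :
    PowerSeries.coeff (R := F) i (PowerSeries.coeff (R := PowerSeries F) m (psSubstT G)) = 0 := by
  rw [coeff_substT, if_neg (by omega)]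

lemma lowTri_mul {A B : PowerSeries (PowerSeries F)}
    (hA : ∀ m i, m < i → PowerSeries.coeff (R := F) i (PowerSeries.coeff (R := PowerSeries F) m A) = 0)
    (hB : ∀ m i, m < i → PowerSeries.coeff (R := F) i (PowerSeries.coeff (R := PowerSeries F) m B) = 0)
    (m i : ℕ) (h : m < i) :
    PowerSeries.coeff (R := F) i (PowerSeries.coeff (R := PowerSeries F) m (A * B)) = 0 := by
  rw [PowerSeries.coeff_mul, map_sum]
  apply Finset.sum_eq_zero
  rintro ⟨a, b⟩ hab
  rw [Finset.HasAntidiagonal.mem_antidiagonal] at hab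
  rw [PowerSeries.coeff_mul]
  apply Finset.sum_eq_zero
  rintro ⟨c, d⟩ hcd
  rw [Finset.HasAntidiagonal.mem_antidiagonal] at hcd
  by_cases hac : a < c
  · rw [hA a c hac, zero_mul]
  · rw [hB b d (by omega), mul_zero]
lemma lowTri_inv {Qs V : PowerSeries (PowerSeries F)}
    (hS : ∀ m i, m < i → PowerSeries.coeff (R := F) i (PowerSeries.coeff (R := PowerSeries F) m Qs) = 0)
    (h0 : PowerSeries.coeff (R := F) 0 (PowerSeries.coeff (R := PowerSeries F) 0 Qs) ≠ 0)
    (hV : V * Qs = 1) :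
    ∀ m i, m < i → PowerSeries.coeff (R := F) i (PowerSeries.coeff (R := PowerSeries F) m V) = 0 := by
  intro m
  induction m using Nat.strong_induction_on with
  | _ m IH =>
    intro i him
    have h := congrArg (fun W => PowerSeries.coeff (R := F) i (PowerSeries.coeff (R := PowerSeries F) m W)) hV
    simp only [PowerSeries.coeff_mul, map_sum, PowerSeries.coeff_one,
      apply_ite (PowerSeries.coeff (R := F) i), map_zero, map_one,
      PowerSeries.coeff_one] at h
    rw [show (if m = 0 then if i = 0 then (1 : F) else 0 else 0) = 0 by
      rw [if_neg (show i ≠ 0 by omega), ite_self]] at h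
    rw [Finset.sum_eq_single_of_mem (m, 0) (Finset.HasAntidiagonal.mem_antidiagonal.mpr (by simp))
      (by
        rintro ⟨a, b⟩ hab hne
        rw [Finset.HasAntidiagonal.mem_antidiagonal] at hab
        have ha : a < m := by
          by_contra hcon
          push_neg at hcon
          exact hne (by simp only [Prod.mk.injEq]; omega)
        apply Finset.sum_eq_zero
        rintro ⟨c, d⟩ hcd
        rw [Finset.HasAntidiagonal.mem_antidiagonal] at hcd
        by_cases hbd : b < d
        · rw [hS b d hbd, mul_zero]
        · rw [IH a ha c (by omega), zero_mul])] at h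
    rw [Finset.sum_eq_single_of_mem (i, 0) (Finset.HasAntidiagonal.mem_antidiagonal.mpr (by simp))
      (by
        rintro ⟨c, d⟩ hcd hne
        rw [Finset.HasAntidiagonal.mem_antidiagonal] at hcd
        have hd : 0 < d := by
          by_contra hcon
          push_neg at hcon
          exact hne (by simp only [Prod.mk.injEq]; omega)
        rw [hS 0 d hd, mul_zero])] at h
    exact (mul_eq_zero.mp h).resolve_right h0

lemma psDiagonal_add (A B : PowerSeries (PowerSeries F)) :
    psDiagonal (A + B) = psDiagonal A + psDiagonal B := by
  ext i
  simp [psDiagonal]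

lemma psDiagonal_X_sq_mul (A : PowerSeries (PowerSeries F))
    (hA : ∀ m i, m < i → PowerSeries.coeff (R := F) i (PowerSeries.coeff (R := PowerSeries F) m A) = 0) :
    psDiagonal (PowerSeries.X ^ 2 * A) = 0 := by
  ext i
  simp only [psDiagonal, coeff_mk, map_zero, PowerSeries.coeff_X_pow_mul',
    apply_ite (PowerSeries.coeff (R := F) i)]
  split
  · exact hA _ _ (by omega)
  · simp
lemma W_rec_coeff {φ : PowerSeries F} {W : PowerSeries (PowerSeries F)}
    (hW : W * (1 - psPsi φ) = 1) (i m : ℕ) :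
    PowerSeries.coeff (R := F) i (PowerSeries.coeff (R := PowerSeries F) m W)
      = (if m = 0 ∧ i = 0 then 1 else 0)
        + ∑ ab ∈ Finset.HasAntidiagonal.antidiagonal m, ∑ cd ∈ Finset.HasAntidiagonal.antidiagonal i,
            (if cd.1 = ab.1 + 1 then PowerSeries.coeff (R := F) (ab.1 + 1) φ else 0)
              * PowerSeries.coeff (R := F) cd.2 (PowerSeries.coeff (R := PowerSeries F) ab.2 W) := by
  have hrec : W = 1 + psPsi φ * W := by linear_combination hW
  conv_lhs => rw [hrec]
  rw [map_add, map_add, PowerSeries.coeff_one, apply_ite (PowerSeries.coeff (R := F) i),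
    map_zero]
  congr 1
  · by_cases hm : m = 0
    · rw [if_pos hm, PowerSeries.coeff_one]
      by_cases hi : i = 0
      · rw [if_pos hi, if_pos ⟨hm, hi⟩]
      · rw [if_neg hi, if_neg (by tauto)]
    · rw [if_neg hm, if_neg (by tauto)]
  · rw [PowerSeries.coeff_mul, map_sum]
    apply Finset.sum_congr rfl
    rintro ⟨a, b⟩ _
    rw [PowerSeries.coeff_mul]
    apply Finset.sum_congr rfl
    rintro ⟨c, d⟩ _
    simp only [psPsi, coeff_mk, coeff_C_mul_X_pow]

lemma W_lowdiag {φ : PowerSeries F} {W : PowerSeries (PowerSeries F)}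
    (hW : W * (1 - psPsi φ) = 1) :
    ∀ i m : ℕ, i ≤ m → ¬(i = 0 ∧ m = 0) →
      PowerSeries.coeff (R := F) i (PowerSeries.coeff (R := PowerSeries F) m W) = 0 := by
  intro i
  induction i using Nat.strong_induction_on with
  | _ i IH =>
    intro m him hne
    rw [W_rec_coeff hW, if_neg (by omega), zero_add]
    apply Finset.sum_eq_zero
    rintro ⟨a, b⟩ hab
    rw [Finset.HasAntidiagonal.mem_antidiagonal] at hab
    apply Finset.sum_eq_zero
    rintro ⟨c, d⟩ hcd
    rw [Finset.HasAntidiagonal.mem_antidiagonal] at hcd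
    by_cases hc : c = a + 1
    · rw [IH d (by omega) b (by omega) (by omega), mul_zero]
    · rw [if_neg hc, zero_mul]

lemma W_diag_zero_zero {φ : PowerSeries F} {W : PowerSeries (PowerSeries F)}
    (hW : W * (1 - psPsi φ) = 1) :
    PowerSeries.coeff (R := F) 0 (PowerSeries.coeff (R := PowerSeries F) 0 W) = 1 := by
  rw [W_rec_coeff hW]
  simp

lemma W_diag_succ {φ : PowerSeries F} {W : PowerSeries (PowerSeries F)}
    (hW : W * (1 - psPsi φ) = 1) (m : ℕ) :
    PowerSeries.coeff (R := F) (m + 1) (PowerSeries.coeff (R := PowerSeries F) m W)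
      = PowerSeries.coeff (R := F) (m + 1) φ := by
  rw [W_rec_coeff hW, if_neg (by omega), zero_add]
  rw [Finset.sum_eq_single_of_mem (m, 0) (Finset.HasAntidiagonal.mem_antidiagonal.mpr (by simp))
    (by
      rintro ⟨a, b⟩ hab hne
      rw [Finset.HasAntidiagonal.mem_antidiagonal] at hab
      have ha : a < m := by
        by_contra hcon
        push_neg at hcon
        exact hne (by simp only [Prod.mk.injEq]; omega)
      apply Finset.sum_eq_zero
      rintro ⟨c, d⟩ hcd
      rw [Finset.HasAntidiagonal.mem_antidiagonal] at hcd
      by_cases hc : c = a + 1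
      · rw [W_lowdiag hW d b (by omega) (by omega), mul_zero]
      · rw [if_neg hc, zero_mul])]
  rw [Finset.sum_eq_single_of_mem (m + 1, 0) (Finset.HasAntidiagonal.mem_antidiagonal.mpr (by simp))
    (by
      rintro ⟨c, d⟩ hcd hne
      rw [Finset.HasAntidiagonal.mem_antidiagonal] at hcd
      by_cases hc : c = m + 1
      · exact absurd (by simp only [Prod.mk.injEq]; omega) hne
      · rw [if_neg hc, zero_mul])]
  rw [if_pos rfl, W_diag_zero_zero hW, mul_one]

lemma psDiagonal_X_mul_W {φ : PowerSeries F} {W : PowerSeries (PowerSeries F)}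
    (hφ0 : PowerSeries.constantCoeff (R := F) φ = 0)
    (hW : W * (1 - psPsi φ) = 1) :
    psDiagonal (PowerSeries.X * W) = φ := by
  ext i
  simp only [psDiagonal, coeff_mk]
  cases i with
  | zero =>
    rw [← pow_one (PowerSeries.X : PowerSeries (PowerSeries F)), coeff_X_pow_mul',
      if_neg (by omega), map_zero, coeff_zero_eq_constantCoeff_apply, hφ0]
  | succ n =>
    rw [coeff_succ_X_mul, W_diag_succ hW]
lemma mk_deriv {R : Type*} [CommRing R] (f : PowerSeries R) :
    (PowerSeries.mk fun j => (j + 1 : ℕ) • PowerSeries.coeff (R := R) (j + 1) f)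
      = PowerSeries.derivative R f := by
  ext n
  rw [coeff_mk, coeff_derivative, nsmul_eq_mul, mul_comm]
  push_cast
  ring

lemma psDeriv_mul {R : Type*} [CommRing R] (f g : PowerSeries R) :
    PowerSeries.derivative R (f * g)
      = f * PowerSeries.derivative R g + g * PowerSeries.derivative R f := by
  rw [show PowerSeries.derivative R (f * g) = (f * g).derivativeFun from rfl,
    PowerSeries.derivativeFun_mul, smul_eq_mul, smul_eq_mul]
  rfl

end Aux

/-- Furstenberg's theorem: if `P(t,y) = (y − φ(t))·Q(t,y)` with `φ(0) = 0` and
`Q(0,0) ≠ 0`, then `φ = D(y²·∂_y P(ty,y) / P(ty,y))`.  The quotient is formalized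
as the unique power series `G` with `G·P(ty,y) = y²·∂_y P(ty,y)` (which determines
`G` since `P(ty,y) ≠ 0` and `F⟦t,y⟧` is a domain). -/

theorem furstenberg_diagonal_formula (F : Type*) [Field F]
    (P Q : PowerSeries (PowerSeries F)) (φ : PowerSeries F)
    (hφ0 : PowerSeries.constantCoeff (R := F) φ = 0)
    (hP : P = (PowerSeries.X - PowerSeries.C (R := PowerSeries F) φ) * Q)
    (hQ : PowerSeries.constantCoeff (R := F)
        (PowerSeries.constantCoeff (R := PowerSeries F) Q) ≠ 0) :
    let dP : PowerSeries (PowerSeries F) :=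
      PowerSeries.mk fun j => (j + 1 : ℕ) • PowerSeries.coeff (R := PowerSeries F) (j + 1) P
    ∀ G : PowerSeries (PowerSeries F),
      G * psSubstT P = PowerSeries.X ^ 2 * psSubstT dP →
      φ = psDiagonal G := by
  intro dP G hG
  set dQ := PowerSeries.derivative (PowerSeries F) Q with hdQdef
  have hdP : dP = Q + (PowerSeries.X * dQ - PowerSeries.C (R := PowerSeries F) φ * dQ) := by
    rw [show dP = PowerSeries.mk fun j =>
        (j + 1 : ℕ) • PowerSeries.coeff (R := PowerSeries F) (j + 1) P from rfl,
      mk_deriv, hP, psDeriv_mul, map_sub, PowerSeries.derivative_X,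
      PowerSeries.derivative_C]
    ring
  have h0' : PowerSeries.coeff (R := F) 0 (PowerSeries.coeff (R := PowerSeries F) 0 (psSubstT Q)) ≠ 0 := by
    rw [coeff_substT, if_pos (le_refl 0)]
    simpa [coeff_zero_eq_constantCoeff_apply] using hQ
  have hcc : PowerSeries.constantCoeff (R := PowerSeries F) (psPsi φ)
      = PowerSeries.C (R := F) (PowerSeries.coeff (R := F) 1 φ) * PowerSeries.X := by
    rw [← coeff_zero_eq_constantCoeff_apply, psPsi, coeff_mk, pow_one]
  have hu : IsUnit ((1 : PowerSeries (PowerSeries F)) - psPsi φ) := by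
    rw [PowerSeries.isUnit_iff_constantCoeff, map_sub, map_one, hcc,
      PowerSeries.isUnit_iff_constantCoeff, map_sub, map_one, map_mul,
      PowerSeries.constantCoeff_C, PowerSeries.constantCoeff_X, mul_zero, sub_zero]
    exact isUnit_one
  have hv : IsUnit (psSubstT Q) := by
    rw [PowerSeries.isUnit_iff_constantCoeff, PowerSeries.isUnit_iff_constantCoeff,
      isUnit_iff_ne_zero, ← coeff_zero_eq_constantCoeff_apply,
      ← coeff_zero_eq_constantCoeff_apply]
    exact h0'
  obtain ⟨W, hW⟩ := hu.exists_left_inv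
  obtain ⟨V, hV⟩ := hv.exists_left_inv
  have h1 : psSubstT P
      = (PowerSeries.X * ((1 : PowerSeries (PowerSeries F)) - psPsi φ)) * psSubstT Q := by
    rw [hP, sub_mul, substT_sub, substT_X_mul, substT_C_mul, psPhi_eq φ hφ0]
    ring
  have h2 : psSubstT dP
      = psSubstT Q
        + (PowerSeries.X * ((1 : PowerSeries (PowerSeries F)) - psPsi φ)) * psSubstT dQ := by
    rw [hdP, substT_add, substT_sub, substT_X_mul, substT_C_mul, psPhi_eq φ hφ0]
    ring
  set G₀ : PowerSeries (PowerSeries F) :=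
    PowerSeries.X * W + PowerSeries.X ^ 2 * (psSubstT dQ * V) with hG₀def
  have hG₀ : G₀ * psSubstT P = PowerSeries.X ^ 2 * psSubstT dP := by
    rw [hG₀def, h1, h2]
    linear_combination (PowerSeries.X ^ 2 * psSubstT Q) * hW
      + (PowerSeries.X ^ 3 * ((1 : PowerSeries (PowerSeries F)) - psPsi φ)
          * psSubstT dQ) * hV
  have hPne : psSubstT P ≠ 0 := by
    rw [h1]
    exact mul_ne_zero (mul_ne_zero PowerSeries.X_ne_zero hu.ne_zero) hv.ne_zero
  have hGG : G = G₀ := mul_right_cancel₀ hPne (hG.trans hG₀.symm)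
  rw [hGG, hG₀def, psDiagonal_add, psDiagonal_X_mul_W hφ0 hW,
    psDiagonal_X_sq_mul _ (lowTri_mul (substT_lowTri dQ)
      (lowTri_inv (substT_lowTri Q) h0' hV)), add_zero]
end

section
/- Let P(t, y) ∈ F⟦t, y⟧ and φ(t) ∈ F⟦t⟧ with φ(0) = 0, P(t, φ(t)) = 0, and ∂_y P(0, 0) = α ≠ 0, over a field F. Then φ(t) = Σ_{m≥1} α^{−(m+1)} · [y^{m−1}]( ∂_y P(t, y) · (α·y − P(t, y))^m ), where [y^{m−1}] extracts the coefficient of y^{m−1} (a power series in t), and the sum converges in the t-adic topology (each coefficient of t^k receives contributions from only finitely many m). -/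
open PowerSeries

section FSaux
open Finset

namespace FSproof

variable {B : Type*} [CommRing B]

lemma coeff_pow_mem (q : B⟦X⟧) (I : Ideal B)
    (h0 : coeff (R := B) 0 q ∈ I) (h1 : coeff (R := B) 1 q ∈ I) :
    ∀ m s j : ℕ, 2*s + j ≤ 2*m → coeff (R := B) j (q^m) ∈ I^s := by
  intro m
  induction m with
  | zero =>
    intro s j h
    have hs : s = 0 := by omega
    have hj : j = 0 := by omega
    subst hs; subst hj
    simp
  | succ m ih =>
    intro s j h
    rw [pow_succ', coeff_mul]
    refine Ideal.sum_mem _ ?_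
    rintro ⟨a, b⟩ hab
    rw [Finset.HasAntidiagonal.mem_antidiagonal] at hab
    dsimp only
    by_cases ha : a ≤ 1
    · rcases Nat.eq_zero_or_pos s with hs | hs
      · subst hs; simp
      · obtain ⟨s', rfl⟩ : ∃ s', s = s' + 1 := ⟨s - 1, by omega⟩
        have hb : coeff (R := B) b (q ^ m) ∈ I ^ s' := ih s' b (by omega)
        have hqa : coeff (R := B) a q ∈ I := by
          interval_cases a
          · exact h0
          · exact h1
        rw [pow_succ']
        exact Ideal.mul_mem_mul hqa hb
    · exact Ideal.mul_mem_left _ _ (ih s b (by omega))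

theorem core (K' : ℕ) (p : B⟦X⟧) (f α β τ : B)
    (hβα : β * α = 1) (hf : f ^ (K' + 1) = 0) (hτ : τ ^ (K' + 1) = 0)
    (hroot : ∑ i ∈ range (K' + 1), coeff (R := B) i p * f ^ i = 0)
    (hp0 : coeff (R := B) 0 p ∈ Ideal.span {τ})
    (hp1 : α - coeff (R := B) 1 p ∈ Ideal.span {τ}) :
    (∀ m : ℕ, 2 * (K' + 1) ≤ m + 1 →
      coeff (R := B) (m - 1) (d⁄dX B p * (C (R := B) α * X - p) ^ m) = 0) ∧
    f = ∑ m ∈ Icc 1 (3 * K' + 3), β ^ (m + 1) *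
        coeff (R := B) (m - 1) (d⁄dX B p * (C (R := B) α * X - p) ^ m) := by
  set K := K' + 1 with hKdef
  set I : Ideal B := Ideal.span {τ} with hI
  have hIK : ∀ x ∈ I ^ K, x = 0 := by
    intro x hx
    rw [hI, Ideal.span_singleton_pow, Ideal.span_singleton_eq_bot.mpr hτ, Ideal.mem_bot] at hx
    exact hx
  set q : B⟦X⟧ := C (R := B) α * X - p with hqdef
  have hq0 : coeff (R := B) 0 q ∈ I := by
    have h : coeff (R := B) 0 q = -coeff (R := B) 0 p := by
      rw [hqdef, map_sub, coeff_C_mul, coeff_X]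
      simp
    rw [h]; exact I.neg_mem hp0
  have hq1 : coeff (R := B) 1 q ∈ I := by
    have h : coeff (R := B) 1 q = α - coeff (R := B) 1 p := by
      rw [hqdef, map_sub, coeff_C_mul, coeff_X]
      simp
    rw [h]; exact hp1
  have hqK : ∀ m j : ℕ, 2 * K + j ≤ 2 * m → coeff (R := B) j (q ^ m) = 0 := fun m j h =>
    hIK _ (coeff_pow_mem q I hq0 hq1 m K j h)
  -- the factorization p = (X - C f) * u
  set u : B⟦X⟧ := mk (fun n => ∑ i ∈ range K, coeff (R := B) (n + 1 + i) p * f ^ i) with hudef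
  have hroot' : ∑ i ∈ range (K + 1), coeff (R := B) i p * f ^ i = 0 := by
    rw [Finset.sum_range_succ, hf, mul_zero, add_zero, hroot]
  have hpu : p = (X - C (R := B) f) * u := by
    ext n
    rw [sub_mul, map_sub]
    cases n with
    | zero =>
      have h1 : coeff (R := B) 0 (X * u) = 0 := by
        rw [coeff_zero_eq_constantCoeff_apply, map_mul, constantCoeff_X, zero_mul]
      have h2 : f * ∑ i ∈ range K, coeff (R := B) (0 + 1 + i) p * f ^ i = -coeff (R := B) 0 p := by
        have h3 := Finset.sum_range_succ' (fun i => coeff (R := B) i p * f ^ i) K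
        rw [hroot'] at h3
        rw [Finset.mul_sum]
        have h4 : ∑ i ∈ range K, f * (coeff (R := B) (0 + 1 + i) p * f ^ i)
            = ∑ i ∈ range K, coeff (R := B) (i + 1) p * f ^ (i + 1) := by
          refine Finset.sum_congr rfl fun i _ => ?_
          have : 0 + 1 + i = i + 1 := by omega
          rw [this]; ring
        rw [h4]
        have h5 : (∑ i ∈ range K, coeff (R := B) (i + 1) p * f ^ (i + 1)) + coeff (R := B) 0 p * f ^ 0 = 0 :=
          h3.symm
        rw [pow_zero, mul_one] at h5
        linear_combination h5
      rw [h1, coeff_C_mul, coeff_mk, h2]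
      ring
    | succ n =>
      rw [coeff_succ_X_mul, coeff_C_mul, coeff_mk, coeff_mk]
      have hA := Finset.sum_range_succ' (fun i => coeff (R := B) (n + 1 + i) p * f ^ i) K'
      have hB := Finset.sum_range_succ (fun i => coeff (R := B) (n + 1 + 1 + i) p * f ^ (i + 1)) K'
      have hfmul : f * ∑ i ∈ range K, coeff (R := B) (n + 1 + 1 + i) p * f ^ i
          = ∑ i ∈ range K, coeff (R := B) (n + 1 + 1 + i) p * f ^ (i + 1) := by
        rw [Finset.mul_sum]
        exact Finset.sum_congr rfl fun i _ => by ring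
      rw [hfmul]
      rw [hKdef] at *
      rw [hA, hB]
      have hlast : coeff (R := B) (n + 1 + 1 + K') p * f ^ (K' + 1) = 0 := by
        rw [hf, mul_zero]
      rw [hlast, add_zero]
      have hcong : ∑ i ∈ range K', coeff (R := B) (n + 1 + (i + 1)) p * f ^ (i + 1)
          = ∑ i ∈ range K', coeff (R := B) (n + 1 + 1 + i) p * f ^ (i + 1) := by
        refine Finset.sum_congr rfl fun i _ => ?_
        have : n + 1 + (i + 1) = n + 1 + 1 + i := by omega
        rw [this]
      rw [hcong]
      have : n + 1 + 0 = n + 1 := by omega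
      rw [this, pow_zero, mul_one]
      ring
  -- u is a unit
  have hu0 : constantCoeff (R := B) u
      = α + ((∑ i ∈ range K', coeff (R := B) (2 + i) p * f ^ (i + 1)) + (coeff (R := B) 1 p - α)) := by
    rw [hudef]
    rw [← coeff_zero_eq_constantCoeff_apply, coeff_mk]
    rw [hKdef]
    rw [Finset.sum_range_succ' (fun i => coeff (R := B) (0 + 1 + i) p * f ^ i) K']
    have hcong : ∑ i ∈ range K', coeff (R := B) (0 + 1 + (i + 1)) p * f ^ (i + 1)
        = ∑ i ∈ range K', coeff (R := B) (2 + i) p * f ^ (i + 1) := by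
      refine Finset.sum_congr rfl fun i _ => ?_
      have : 0 + 1 + (i + 1) = 2 + i := by omega
      rw [this]
    rw [hcong]
    have : (0:ℕ) + 1 + 0 = 1 := by omega
    rw [this, pow_zero, mul_one]
    ring
  have hnil : IsNilpotent ((∑ i ∈ range K', coeff (R := B) (2 + i) p * f ^ (i + 1)) + (coeff (R := B) 1 p - α)) := by
    have hnil1 : IsNilpotent (∑ i ∈ range K', coeff (R := B) (2 + i) p * f ^ (i + 1)) := by
      refine isNilpotent_sum fun i _ => ⟨K, ?_⟩
      rw [mul_pow, ← pow_mul, mul_comm (i + 1) K, pow_mul, hf]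
      simp
    have hnil2 : IsNilpotent (coeff (R := B) 1 p - α) := by
      obtain ⟨c, hc⟩ := Ideal.mem_span_singleton.mp (hI ▸ hp1)
      have h : coeff (R := B) 1 p - α = -(τ * c) := by rw [← hc]; ring
      rw [h]
      exact IsNilpotent.neg ⟨K, by rw [mul_pow, hτ, zero_mul]⟩
    exact Commute.isNilpotent_add (Commute.all _ _) hnil1 hnil2
  have hαu : IsUnit α := IsUnit.of_mul_eq_one β (by rw [mul_comm]; exact hβα)
  have huu : IsUnit u := by
    rw [PowerSeries.isUnit_iff_constantCoeff, hu0]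
    exact hnil.isUnit_add_left_of_commute hαu (Commute.all _ _)
  obtain ⟨v, huv⟩ := huu.exists_right_inv
  -- the telescoping identity
  set M := 3 * K' + 3 with hM
  set N := 3 * K' + 2 with hN
  set S : B⟦X⟧ := ∑ m ∈ Icc 1 M, C (R := B) (β ^ (m + 1)) * q ^ m * X ^ (M - m) with hS
  set R : B⟦X⟧ := C (R := B) β * q * X ^ M - C (R := B) (β ^ (M + 1)) * q ^ (M + 1) with hRdef
  have hpS : p * S = R := by
    have hterm : ∀ m ∈ Icc 1 M, p * (C (R := B) (β ^ (m + 1)) * q ^ m * X ^ (M - m))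
        = (C (R := B) (β ^ m) * q ^ m * X ^ (M + 1 - m))
          - (C (R := B) (β ^ (m + 1)) * q ^ (m + 1) * X ^ (M + 1 - (m + 1))) := by
      intro m hm
      rw [Finset.mem_Icc] at hm
      have hp' : p = C (R := B) α * X - q := by rw [hqdef]; ring
      have h1 : M + 1 - m = (M - m) + 1 := by omega
      have h2 : M + 1 - (m + 1) = M - m := by omega
      have hβm : β ^ m * (β * α) = β ^ m := by rw [hβα, mul_one]
      rw [hp', h1, h2]
      have hc : C (R := B) (β ^ (m + 1)) * C (R := B) α = C (R := B) (β ^ m) := by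
        rw [← map_mul]
        congr 1
        rw [pow_succ, mul_assoc, hβα, mul_one]
      calc (C (R := B) α * X - q) * (C (R := B) (β ^ (m + 1)) * q ^ m * X ^ (M - m))
          = (C (R := B) (β ^ (m + 1)) * C (R := B) α) * q ^ m * (X ^ (M - m) * X)
            - C (R := B) (β ^ (m + 1)) * (q ^ m * q) * X ^ (M - m) := by ring
        _ = _ := by rw [hc, ← pow_succ q m, ← pow_succ X (M - m)]
    rw [hS, Finset.mul_sum, Finset.sum_congr rfl hterm]
    rw [← Finset.Ico_add_one_right_eq_Icc, Finset.sum_Ico_eq_sum_range]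
    have hMM : M + 1 - 1 = M := by omega
    rw [hMM]
    have htel := Finset.sum_range_sub'
      (fun i => C (R := B) (β ^ (1 + i)) * q ^ (1 + i) * X ^ (M + 1 - (1 + i))) M
    have hshape : ∑ i ∈ range M,
        (C (R := B) (β ^ (1 + i)) * q ^ (1 + i) * X ^ (M + 1 - (1 + i))
          - C (R := B) (β ^ (1 + i + 1)) * q ^ (1 + i + 1) * X ^ (M + 1 - (1 + i + 1)))
        = C (R := B) (β ^ (1 + 0)) * q ^ (1 + 0) * X ^ (M + 1 - (1 + 0))
          - C (R := B) (β ^ (1 + M)) * q ^ (1 + M) * X ^ (M + 1 - (1 + M)) := htel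
    rw [hshape, hRdef]
    have e1 : (1:ℕ) + 0 = 1 := rfl
    have e2 : M + 1 - 1 = M := by omega
    have e3 : (1:ℕ) + M = M + 1 := by omega
    have e4 : M + 1 - (M + 1) = 0 := by omega
    rw [e1, e2, e3, e4]
    ring_nf
  have hXfu : (X - C (R := B) f) * (u * S) = R := by rw [← mul_assoc, ← hpu, hpS]
  -- coefficient recursion
  have hrec : ∀ n, coeff (R := B) n (u * S) = coeff (R := B) (n + 1) R + f * coeff (R := B) (n + 1) (u * S) := by
    intro n
    have h1 : coeff (R := B) (n + 1) R
        = coeff (R := B) n (u * S) - f * coeff (R := B) (n + 1) (u * S) := by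
      rw [← hXfu, sub_mul, map_sub, coeff_succ_X_mul, coeff_C_mul]
    rw [h1]; ring
  have hiter : ∀ j n, coeff (R := B) n (u * S)
      = (∑ i ∈ range j, f ^ i * coeff (R := B) (n + 1 + i) R) + f ^ j * coeff (R := B) (n + j) (u * S) := by
    intro j
    induction j with
    | zero => intro n; simp
    | succ j ih =>
      intro n
      rw [ih n, hrec (n + j), Finset.sum_range_succ]
      have e1 : n + j + 1 = n + 1 + j := by omega
      have e2 : n + (j + 1) = n + j + 1 := by omega
      rw [e2, ← e1]
      ring
  have ha : coeff (R := B) N (u * S) = ∑ i ∈ range K, f ^ i * coeff (R := B) (N + 1 + i) R := by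
    rw [hiter K N, hf, zero_mul, add_zero]
  have hcoeffR : ∀ i ∈ range K, f ^ i * coeff (R := B) (N + 1 + i) R = f ^ i * (β * coeff (R := B) i q) := by
    intro i hi
    rw [Finset.mem_range] at hi
    congr 1
    rw [hRdef, map_sub]
    have h1 : coeff (R := B) (N + 1 + i) (C (R := B) β * q * X ^ M) = β * coeff (R := B) i q := by
      have e : N + 1 + i = i + M := by omega
      rw [e, mul_assoc, coeff_C_mul, coeff_mul_X_pow]
    have h2 : coeff (R := B) (N + 1 + i) (C (R := B) (β ^ (M + 1)) * q ^ (M + 1)) = 0 := by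
      rw [coeff_C_mul, hqK (M + 1) (N + 1 + i) (by omega), mul_zero]
    rw [h1, h2, sub_zero]
  have hsum : ∑ i ∈ range K, f ^ i * (β * coeff (R := B) i q) = f := by
    have hstep : ∑ i ∈ range K, f ^ i * (β * coeff (R := B) i q)
        = β * ((∑ i ∈ range K, (α * coeff (R := B) i X) * f ^ i)
            - ∑ i ∈ range K, coeff (R := B) i p * f ^ i) := by
      rw [← Finset.sum_sub_distrib, Finset.mul_sum]
      refine Finset.sum_congr rfl fun i _ => ?_
      have : coeff (R := B) i q = α * coeff (R := B) i X - coeff (R := B) i p := by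
        rw [hqdef, map_sub, coeff_C_mul]
      rw [this]; ring
    rw [hstep, hroot, sub_zero]
    have hx : ∀ i, (α * coeff (R := B) i X) * f ^ i = if i = 1 then α * f ^ i else 0 := by
      intro i
      rw [coeff_X]
      split <;> simp
    rw [Finset.sum_congr rfl (fun i _ => hx i),
      Finset.sum_ite_eq' (range K) 1 (fun i => α * f ^ i)]
    by_cases h1K : (1 : ℕ) ∈ range K
    · rw [if_pos h1K, pow_one, ← mul_assoc, hβα, one_mul]
    · rw [if_neg h1K]
      have hK1 : K = 1 := by
        rw [Finset.mem_range] at h1K; omega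
      have hf0 : f = 0 := by rw [← pow_one f, ← hK1, hf]
      rw [hf0, mul_zero]
  -- derivative
  have hdp : d⁄dX B p = u + (X - C (R := B) f) * d⁄dX B u := by
    conv_lhs => rw [hpu]
    rw [Derivation.leibniz, smul_eq_mul, smul_eq_mul, map_sub, derivative_X, derivative_C,
      sub_zero, mul_one]
    ring
  have hXfS : (X - C (R := B) f) * S = R * v := by
    calc (X - C (R := B) f) * S = (X - C (R := B) f) * S * (u * v) := by rw [huv, mul_one]
      _ = ((X - C (R := B) f) * (u * S)) * v := by ring
      _ = R * v := by rw [hXfu]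
  have hdS : coeff (R := B) N (d⁄dX B p * S)
      = coeff (R := B) N (u * S) + coeff (R := B) N (d⁄dX B u * (R * v)) := by
    rw [hdp, add_mul, map_add]
    congr 1
    rw [show (X - C (R := B) f) * d⁄dX B u * S = d⁄dX B u * ((X - C (R := B) f) * S) from by ring, hXfS]
  have hjunk : coeff (R := B) N (d⁄dX B u * (R * v)) = 0 := by
    rw [hRdef]
    have hsplit : d⁄dX B u * ((C (R := B) β * q * X ^ M - C (R := B) (β ^ (M + 1)) * q ^ (M + 1)) * v)
        = C (R := B) β * ((d⁄dX B u * v * q) * X ^ M)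
          - C (R := B) (β ^ (M + 1)) * (d⁄dX B u * v * q ^ (M + 1)) := by ring
    rw [hsplit, map_sub, coeff_C_mul, coeff_C_mul]
    have h1 : coeff (R := B) N ((d⁄dX B u * v * q) * X ^ M) = 0 := by
      rw [coeff_mul_X_pow', if_neg (by omega)]
    have h2 : coeff (R := B) N (d⁄dX B u * v * q ^ (M + 1)) = 0 := by
      rw [coeff_mul]
      refine Finset.sum_eq_zero ?_
      rintro ⟨a, b⟩ hab
      rw [Finset.HasAntidiagonal.mem_antidiagonal] at hab
      have hz : coeff (R := B) b (q ^ (M + 1)) = 0 := hqK (M + 1) b (by omega)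
      dsimp only
      rw [hz, mul_zero]
    rw [h1, h2, mul_zero, mul_zero, sub_zero]
  have hmain : f = coeff (R := B) N (d⁄dX B p * S) := by
    rw [hdS, hjunk, add_zero, ha, Finset.sum_congr rfl hcoeffR, hsum]
  have hexp : coeff (R := B) N (d⁄dX B p * S)
      = ∑ m ∈ Icc 1 M, β ^ (m + 1) * coeff (R := B) (m - 1) (d⁄dX B p * q ^ m) := by
    rw [hS, Finset.mul_sum, map_sum]
    refine Finset.sum_congr rfl fun m hm => ?_
    rw [Finset.mem_Icc] at hm
    have h3 : d⁄dX B p * (C (R := B) (β ^ (m + 1)) * q ^ m * X ^ (M - m))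
        = C (R := B) (β ^ (m + 1)) * ((d⁄dX B p * q ^ m) * X ^ (M - m)) := by ring
    rw [h3, coeff_C_mul, coeff_mul_X_pow', if_pos (show M - m ≤ N by omega)]
    have e : N - (M - m) = m - 1 := by omega
    rw [e]
  constructor
  · intro m hm
    rw [coeff_mul]
    refine Finset.sum_eq_zero ?_
    rintro ⟨a, b⟩ hab
    rw [Finset.HasAntidiagonal.mem_antidiagonal] at hab
    have hz : coeff (R := B) b (q ^ m) = 0 := hqK m b (by omega)
    dsimp only
    rw [hz, mul_zero]
  · rw [hmain, hexp]

end FSproof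

end FSaux

/-- Flajolet–Soria style formula for a power series root of multiplicity one.
Bivariate power series `P(t,y) ∈ F⟦t,y⟧` are represented as elements of `F⟦t⟧⟦y⟧`
(outer variable `y`).  If `φ(0) = 0`, `P(t,φ(t)) = 0` (stated coefficient-wise,
which is well defined since `φ` has zero constant term) and `∂_y P(0,0) = α ≠ 0`,
then `φ(t) = ∑_{m≥1} α^{-(m+1)} [y^{m-1}](∂_y P(t,y)·(α y − P(t,y))^m)`, the sum
converging `t`-adically: each `t`-coefficient receives only finitely many nonzero
contributions. -/
theorem flajolet_soria_formula (F : Type*) [Field F]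
    (P : PowerSeries (PowerSeries F)) (φ : PowerSeries F) (α : F) (hα : α ≠ 0)
    (hφ0 : PowerSeries.constantCoeff (R := F) φ = 0)
    (hroot : ∀ k : ℕ, PowerSeries.coeff (R := F) k
        (∑ j ∈ Finset.range (k + 1),
          PowerSeries.coeff (R := PowerSeries F) j P * φ ^ j) = 0)
    (hderiv : PowerSeries.constantCoeff (R := F)
        (PowerSeries.coeff (R := PowerSeries F) 1 P) = α) :
    -- the formal partial derivative `∂_y P`
    let dP : PowerSeries (PowerSeries F) :=
      PowerSeries.mk fun j => (j + 1 : ℕ) • PowerSeries.coeff (R := PowerSeries F) (j + 1) P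
    -- `T m k` is the coefficient of `t^k` in `[y^{m-1}](∂_y P·(α y − P)^m)`
    let T : ℕ → ℕ → F := fun m k =>
      PowerSeries.coeff (R := F) k (PowerSeries.coeff (R := PowerSeries F) (m - 1)
        (dP * (PowerSeries.C (R := PowerSeries F) (PowerSeries.C (R := F) α) * PowerSeries.X
            - P) ^ m))
    ∀ k : ℕ, ∃ M : ℕ,
      (∀ m : ℕ, M < m → T m k = 0) ∧
      PowerSeries.coeff (R := F) k φ = ∑ m ∈ Finset.Icc 1 M, α⁻¹ ^ (m + 1) * T m k := by
  intro dP T k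
  classical
  set Iq : Ideal (PowerSeries F) := Ideal.span {(X : PowerSeries F) ^ (k + 1)} with hIq
  let B := PowerSeries F ⧸ Iq
  let π : PowerSeries F →+* B := Ideal.Quotient.mk Iq
  have hπ0 : ∀ z : PowerSeries F, π z = 0 ↔ (X : PowerSeries F) ^ (k + 1) ∣ z := by
    intro z
    rw [show π z = Ideal.Quotient.mk Iq z from rfl, Ideal.Quotient.eq_zero_iff_mem, hIq,
      Ideal.mem_span_singleton]
  have hπcoeff : ∀ z w : PowerSeries F, π z = π w → coeff (R := F) k z = coeff (R := F) k w := by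
    intro z w h
    have h0 : π (z - w) = 0 := by rw [map_sub, h, sub_self]
    have hd := X_pow_dvd_iff.mp ((hπ0 _).mp h0) k (by omega)
    rw [map_sub, sub_eq_zero] at hd
    exact hd
  set p : PowerSeries B := PowerSeries.map π P with hpdef
  set f : B := π φ with hfdef
  have hcoeffp : ∀ j, coeff (R := B) j p = π (coeff (R := (PowerSeries F)) j P) := fun j =>
    PowerSeries.coeff_map π j P
  have hXdvdφ : (X : PowerSeries F) ∣ φ := X_dvd_iff.mpr hφ0
  have hf : f ^ (k + 1) = 0 := by
    rw [hfdef, ← map_pow, hπ0]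
    exact pow_dvd_pow_of_dvd hXdvdφ (k + 1)
  have hτ : (π X) ^ (k + 1) = 0 := by
    rw [← map_pow, hπ0]
  have hβα : π (C (R := F) α⁻¹) * π (C (R := F) α) = 1 := by
    rw [← map_mul, ← map_mul, inv_mul_cancel₀ hα, map_one, map_one]
  have hrootB : ∑ i ∈ Finset.range (k + 1), coeff (R := B) i p * f ^ i = 0 := by
    have hdvd : (X : PowerSeries F) ^ (k + 1)
        ∣ ∑ j ∈ Finset.range (k + 1), coeff (R := (PowerSeries F)) j P * φ ^ j := by
      rw [X_pow_dvd_iff]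
      intro m hm
      rw [map_sum]
      have hsub : ∑ j ∈ Finset.range (k + 1), coeff (R := F) m (coeff (R := (PowerSeries F)) j P * φ ^ j)
          = ∑ j ∈ Finset.range (m + 1), coeff (R := F) m (coeff (R := (PowerSeries F)) j P * φ ^ j) := by
        symm
        apply Finset.sum_subset
        · intro x hx
          rw [Finset.mem_range] at *
          omega
        · intro j hj hnj
          rw [Finset.mem_range] at hj hnj
          have hjd : (X : PowerSeries F) ^ j ∣ coeff (R := (PowerSeries F)) j P * φ ^ j :=
            Dvd.dvd.mul_left (pow_dvd_pow_of_dvd hXdvdφ j) _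
          exact X_pow_dvd_iff.mp hjd m (by omega)
      rw [hsub, ← map_sum]
      exact hroot m
    calc ∑ i ∈ Finset.range (k + 1), coeff (R := B) i p * f ^ i
        = π (∑ j ∈ Finset.range (k + 1), coeff (R := (PowerSeries F)) j P * φ ^ j) := by
          rw [map_sum]
          exact Finset.sum_congr rfl fun i _ => by rw [map_mul, map_pow, hcoeffp]
      _ = 0 := (hπ0 _).mpr hdvd
  have hp0 : coeff (R := B) 0 p ∈ Ideal.span {π X} := by
    have h0 : constantCoeff (R := F) (coeff (R := (PowerSeries F)) 0 P) = 0 := by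
      have h := hroot 0
      simpa using h
    obtain ⟨w, hw⟩ := X_dvd_iff.mpr h0
    rw [hcoeffp, hw, map_mul]
    exact Ideal.mul_mem_right _ _ (Ideal.mem_span_singleton_self _)
  have hp1 : π (C (R := F) α) - coeff (R := B) 1 p ∈ Ideal.span {π X} := by
    have h0 : constantCoeff (R := F) (C (R := F) α - coeff (R := (PowerSeries F)) 1 P) = 0 := by
      rw [map_sub, constantCoeff_C, hderiv, sub_self]
    obtain ⟨w, hw⟩ := X_dvd_iff.mpr h0
    rw [hcoeffp, ← map_sub, hw, map_mul]
    exact Ideal.mul_mem_right _ _ (Ideal.mem_span_singleton_self _)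
  obtain ⟨hvanish, hsum⟩ := FSproof.core k p f (π (C (R := F) α)) (π (C (R := F) α⁻¹)) (π X)
    hβα hf hτ hrootB hp0 hp1
  -- transfer back
  have hmapdP : d⁄dX B p = PowerSeries.map π dP := by
    ext n
    rw [coeff_derivative, PowerSeries.coeff_map, PowerSeries.coeff_map]
    have hdPn : coeff (R := (PowerSeries F)) n dP = (n + 1 : ℕ) • coeff (R := (PowerSeries F)) (n + 1) P :=
      coeff_mk n _
    rw [hdPn, map_nsmul, nsmul_eq_mul]
    push_cast
    ring
  have hmapq : C (R := B) (π (C (R := F) α)) * X - p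
      = PowerSeries.map π (C (R := (PowerSeries F)) (C (R := F) α) * X - P) := by
    rw [map_sub, map_mul, PowerSeries.map_C, PowerSeries.map_X, hpdef]
  have hTm : ∀ m : ℕ,
      coeff (R := B) (m - 1) (d⁄dX B p * (C (R := B) (π (C (R := F) α)) * X - p) ^ m)
        = π (coeff (R := (PowerSeries F)) (m - 1)
            (dP * (C (R := (PowerSeries F)) (C (R := F) α) * X - P) ^ m)) := by
    intro m
    rw [hmapdP, hmapq, ← map_pow, ← map_mul, PowerSeries.coeff_map]
  refine ⟨3 * k + 3, ?_, ?_⟩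
  · intro m hm
    have h0 : π (coeff (R := (PowerSeries F)) (m - 1)
        (dP * (C (R := (PowerSeries F)) (C (R := F) α) * X - P) ^ m)) = 0 := by
      rw [← hTm m]
      exact hvanish m (by omega)
    exact X_pow_dvd_iff.mp ((hπ0 _).mp h0) k (by omega)
  · have hπeq : π φ = π (∑ m ∈ Finset.Icc 1 (3 * k + 3),
        C (R := F) (α⁻¹ ^ (m + 1)) * coeff (R := (PowerSeries F)) (m - 1)
          (dP * (C (R := (PowerSeries F)) (C (R := F) α) * X - P) ^ m)) := by
      rw [map_sum, ← hfdef, hsum]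
      refine Finset.sum_congr rfl fun m _ => ?_
      rw [hTm m, ← map_pow, ← map_pow, ← map_mul]
    have hk := hπcoeff _ _ hπeq
    rw [hk, map_sum]
    refine Finset.sum_congr rfl fun m _ => ?_
    rw [coeff_C_mul]
end

section
/- Let f(y), g(y) be monic polynomials over a field K, let Σ = {σ_1, ..., σ_m} be the multiset of roots of f over K̄ counted with multiplicity, and define h(x, y) = (y − x) · g(x). If r is the number of elements σ of Σ (with multiplicity) for which g(σ) ≠ 0, then e_r({h(σ, y) : σ ∈ Σ}) = (∏_{σ ∈ Σ, g(σ)≠0} (y − σ)) · e_r({g(σ) : σ ∈ Σ}) in K̄[y], where the products and elementary symmetric functions over Σ account for multiplicity; consequently Filter(f | g ≠ 0) = e_r({h(σ, y) : σ ∈ Σ}) / e_r({g(σ) : σ ∈ Σ}). -/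
open Polynomial

section Aux

variable {R : Type*} [CommSemiring R]

lemma aux_powersetCard_self {α : Type*} (s : Multiset α) :
    s.powersetCard (Multiset.card s) = {s} := by
  induction s using Multiset.induction with
  | empty => simp
  | cons a s ih =>
    rw [Multiset.card_cons, Multiset.powersetCard_cons,
      Multiset.powersetCard_eq_empty _ (by simp), ih]
    simp

lemma aux_esymm_card (s : Multiset R) : s.esymm (Multiset.card s) = s.prod := by
  rw [Multiset.esymm, aux_powersetCard_self]
  simp

lemma aux_esymm_zero_cons (s : Multiset R) (n : ℕ) :
    ((0 : R) ::ₘ s).esymm n = s.esymm n := by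
  cases n with
  | zero => simp [Multiset.esymm]
  | succ n =>
    rw [Multiset.esymm, Multiset.powersetCard_cons, Multiset.map_add, Multiset.sum_add,
      Multiset.map_map]
    have : ∀ t ∈ s.powersetCard n, (Multiset.prod ∘ (Multiset.cons 0)) t = 0 := by
      intro t _; simp
    rw [Multiset.map_congr rfl this, Multiset.esymm]
    simp

lemma aux_esymm_add_zeros (s t : Multiset R) (ht : ∀ x ∈ t, x = 0) (n : ℕ) :
    (s + t).esymm n = s.esymm n := by
  induction t using Multiset.induction with
  | empty => simp
  | cons a t ih =>
    have ha : a = 0 := ht a (Multiset.mem_cons_self a t)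
    have : s + a ::ₘ t = a ::ₘ (s + t) := by
      rw [Multiset.add_cons]
    rw [this, ha, aux_esymm_zero_cons, ih fun x hx => ht x (Multiset.mem_cons_of_mem hx)]

end Aux

open Classical in
/-- With `S` the multiset of roots of monic `f` over the algebraic closure,
`h(x,y) = (y - x)·g(x)`, and `r` the number of `σ ∈ S` (with multiplicity) with
`g(σ) ≠ 0`: `e_r({h(σ,y) : σ ∈ S}) = (∏_{σ ∈ S, g(σ)≠0} (y - σ)) · e_r({g(σ) : σ ∈ S})`
in `K̄[y]`.  The first factor on the right is `Filter(f ∣ g ≠ 0)`. -/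
theorem esymm_filter_identity (K : Type*) [Field K] (f g : Polynomial K)
    (hf : f.Monic) :
    let Kbar := AlgebraicClosure K
    let S : Multiset Kbar := (f.map (algebraMap K Kbar)).roots
    let gval : Kbar → Kbar := fun σ => (g.map (algebraMap K Kbar)).eval σ
    let r : ℕ := (S.filter fun σ => gval σ ≠ 0).card
    let h : Kbar → Polynomial Kbar :=
      fun σ => (Polynomial.X - Polynomial.C σ) * Polynomial.C (gval σ)
    let Filt : Polynomial Kbar :=
      ((S.filter fun σ => gval σ ≠ 0).map fun σ => Polynomial.X - Polynomial.C σ).prod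
    (S.map h).esymm r = Filt * Polynomial.C ((S.map gval).esymm r) := by
  intro Kbar S gval r h Filt
  have hsplit : S = (S.filter fun σ => gval σ ≠ 0) + (S.filter fun σ => ¬ gval σ ≠ 0) :=
    (Multiset.filter_add_not _ S).symm
  set Sf := S.filter fun σ => gval σ ≠ 0 with hSf
  set Sn := S.filter fun σ => ¬ gval σ ≠ 0 with hSn
  have hSnzero : ∀ σ ∈ Sn, gval σ = 0 := by
    intro σ hσ
    have := Multiset.of_mem_filter hσ
    simpa using this
  -- LHS
  have hL : (S.map h).esymm r = (Sf.map h).esymm r := by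
    rw [hsplit, Multiset.map_add]
    refine aux_esymm_add_zeros _ _ ?_ r
    intro x hx
    obtain ⟨σ, hσ, rfl⟩ := Multiset.mem_map.mp hx
    simp [h, hSnzero σ hσ]
  have hcardf : Multiset.card (Sf.map h) = r := by simp only [Multiset.card_map]; rfl
  have hL2 : (Sf.map h).esymm r = (Sf.map h).prod := by
    rw [← hcardf, aux_esymm_card]
  -- RHS esymm
  have hR : (S.map gval).esymm r = (Sf.map gval).esymm r := by
    rw [hsplit, Multiset.map_add]
    refine aux_esymm_add_zeros _ _ ?_ r
    intro x hx
    obtain ⟨σ, hσ, rfl⟩ := Multiset.mem_map.mp hx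
    exact hSnzero σ hσ
  have hcardg : Multiset.card (Sf.map gval) = r := by simp only [Multiset.card_map]; rfl
  have hR2 : (Sf.map gval).esymm r = (Sf.map gval).prod := by
    rw [← hcardg, aux_esymm_card]
  rw [hL, hL2, hR, hR2]
  have : (Sf.map h).prod =
      (Sf.map fun σ => Polynomial.X - Polynomial.C σ).prod *
        (Sf.map fun σ => Polynomial.C (gval σ)).prod := by
    rw [← Multiset.prod_map_mul]
  rw [this]
  congr 1
  rw [show (Multiset.map (fun σ => Polynomial.C (gval σ)) Sf)
        = (Sf.map gval).map Polynomial.C from (Multiset.map_map _ _ _).symm,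
    Multiset.prod_hom]
end

section
/- Let f, g be monic polynomials over a field K with deg f > deg g ≥ 1 and let F(y, z) = f(y) + z·g(y), viewed as a monic polynomial in y over K[z]. If F(y,z) factors over the algebraic closure of K(z) as ∏_i (y − ρ_i)^{c_i} with the ρ_i distinct, define Filter(F | g ≠ 0) := ∏_{i : g(ρ_i) ≠ 0} (y − ρ_i)^{c_i}. Then the quotient F(y, z) / Filter(F(y, z) | g ≠ 0) equals the monic gcd of f(y) and g(y) in K[y]. -/
open Polynomial

open Classical in
/-- For monic `f, g` over `K` with `deg f > deg g ≥ 1`, let `F(y,z) = f(y) + z·g(y)`,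
viewed as a monic polynomial in `y` over the algebraic closure `L` of `K(z)`.  If
`Filter(F ∣ g ≠ 0)` is the product of `(y - ρ)` over the roots `ρ` of `F` in `L`
(with multiplicity) at which `g(ρ) ≠ 0`, then `F = gcd(f,g)·Filter(F ∣ g ≠ 0)`, i.e.
the monic gcd of `f` and `g` equals `F / Filter(F ∣ g ≠ 0)`. -/
theorem gcd_eq_generic_combination_div_filter (K : Type*) [Field K]
    (f g d : Polynomial K) (hf : f.Monic) (hg : g.Monic)
    (hdeg : g.natDegree < f.natDegree) (hg1 : 1 ≤ g.natDegree)
    (hd : d.Monic) (hgcd : ∀ q : Polynomial K, (q ∣ f ∧ q ∣ g) ↔ q ∣ d) :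
    let L := AlgebraicClosure (RatFunc K)
    let φ : K →+* L := (algebraMap (RatFunc K) L).comp (algebraMap K (RatFunc K))
    let z : L := algebraMap (RatFunc K) L RatFunc.X
    let F : Polynomial L := f.map φ + Polynomial.C z * g.map φ
    let Filt : Polynomial L :=
      ((F.roots.filter fun ρ => (g.map φ).eval ρ ≠ 0).map
        fun ρ => Polynomial.X - Polynomial.C ρ).prod
    F = d.map φ * Filt := by
  intro L φ z F Filt
  classical
  have hφ : Function.Injective φ := φ.injective
  have hφalg : algebraMap K L = φ := IsScalarTower.algebraMap_eq K (RatFunc K) L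
  -- z is transcendental over K
  have hzt : Transcendental K z := by
    have h1 : Transcendental K (RatFunc.X : RatFunc K) := by
      have := (transcendental_algebraMap_iff (A := RatFunc K) (S := Polynomial K)
        (R := K) (a := Polynomial.X)
        (IsFractionRing.injective (Polynomial K) (RatFunc K))).2 (Polynomial.transcendental_X K)
      simpa using this
    exact (transcendental_algebraMap_iff (A := L) (S := RatFunc K) (R := K)
      (algebraMap (RatFunc K) L).injective).2 h1
  have hz0 : z ≠ 0 := by
    show algebraMap (RatFunc K) L RatFunc.X ≠ 0
    exact (_root_.map_ne_zero _).mpr RatFunc.X_ne_zero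
  -- d divides f and g
  obtain ⟨hdf, hdg⟩ := (hgcd d).mpr dvd_rfl
  obtain ⟨f₁, hf₁⟩ := hdf
  obtain ⟨g₁, hg₁⟩ := hdg
  have hf₁m : f₁.Monic := hd.of_mul_monic_left (hf₁ ▸ hf)
  have hg₁m : g₁.Monic := hd.of_mul_monic_left (hg₁ ▸ hg)
  -- f₁ and g₁ are coprime
  have hcop : IsCoprime f₁ g₁ := by
    rw [← EuclideanDomain.gcd_isUnit_iff]
    have h1 : d * EuclideanDomain.gcd f₁ g₁ ∣ d := (hgcd _).mp
      ⟨hf₁ ▸ mul_dvd_mul_left d (EuclideanDomain.gcd_dvd_left _ _),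
       hg₁ ▸ mul_dvd_mul_left d (EuclideanDomain.gcd_dvd_right _ _)⟩
    have h2 : EuclideanDomain.gcd f₁ g₁ ∣ 1 :=
      (mul_dvd_mul_iff_left hd.ne_zero).mp (by simpa using h1)
    exact isUnit_of_dvd_one h2
  have hcopL : IsCoprime (f₁.map φ) (g₁.map φ) := hcop.map (Polynomial.mapRingHom φ)
  -- degrees
  have hnf : f.natDegree = d.natDegree + f₁.natDegree := by
    rw [hf₁, Polynomial.natDegree_mul hd.ne_zero hf₁m.ne_zero]
  have hng : g.natDegree = d.natDegree + g₁.natDegree := by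
    rw [hg₁, Polynomial.natDegree_mul hd.ne_zero hg₁m.ne_zero]
  have hdeg₁ : g₁.natDegree < f₁.natDegree := by omega
  -- the cofactor polynomial G
  set G : Polynomial L := f₁.map φ + Polynomial.C z * g₁.map φ with hGdef
  have hFd : F = d.map φ * G := by
    show f.map φ + Polynomial.C z * g.map φ = _
    rw [hf₁, hg₁, Polynomial.map_mul, Polynomial.map_mul, hGdef]
    ring
  have hG : G.Monic := by
    apply (hf₁m.map φ).add_of_left
    rw [Polynomial.degree_mul, Polynomial.degree_C hz0, zero_add,
      Polynomial.degree_map_eq_of_injective hφ, Polynomial.degree_map_eq_of_injective hφ]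
    exact Polynomial.degree_lt_degree hdeg₁
  -- roots of F
  have hroots : F.roots = (d.map φ).roots + G.roots := by
    rw [hFd, Polynomial.roots_mul (mul_ne_zero (hd.map φ).ne_zero hG.ne_zero)]
  -- roots of d.map φ are filtered out
  have h1 : ((d.map φ).roots.filter fun ρ => (g.map φ).eval ρ ≠ 0) = 0 := by
    rw [Multiset.filter_eq_nil]
    intro ρ hρ h
    apply h
    have hρ0 : (d.map φ).eval ρ = 0 := Polynomial.isRoot_of_mem_roots hρ
    rw [hg₁, Polynomial.map_mul, Polynomial.eval_mul, hρ0, zero_mul]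
  -- roots of G all survive the filter
  have h2 : (G.roots.filter fun ρ => (g.map φ).eval ρ ≠ 0) = G.roots := by
    rw [Multiset.filter_eq_self]
    intro ρ hρ hgρ
    have hGρ : (f₁.map φ).eval ρ + z * (g₁.map φ).eval ρ = 0 := by
      have := Polynomial.isRoot_of_mem_roots hρ
      simpa [hGdef, Polynomial.IsRoot] using this
    have hdg0 : (d.map φ).eval ρ * (g₁.map φ).eval ρ = 0 := by
      have : (g.map φ).eval ρ = (d.map φ).eval ρ * (g₁.map φ).eval ρ := by
        rw [hg₁, Polynomial.map_mul, Polynomial.eval_mul]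
      rw [← this, hgρ]
    by_cases hcase : (g₁.map φ).eval ρ = 0
    · -- common root of f₁ and g₁ : contradicts coprimality
      have hf0 : (f₁.map φ).eval ρ = 0 := by
        rw [hcase, mul_zero, add_zero] at hGρ; exact hGρ
      obtain ⟨a, b, hab⟩ := hcopL
      have := congrArg (Polynomial.eval ρ) hab
      simp [hf0, hcase] at this
    · -- ρ is a root of d, hence algebraic over K; z would be algebraic
      have hd0 : (d.map φ).eval ρ = 0 := by
        rcases mul_eq_zero.mp hdg0 with h | h
        · exact h
        · exact absurd h hcase
      have hρA : ρ ∈ algebraicClosure K L := by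
        rw [mem_algebraicClosure_iff]
        exact ⟨d, hd.ne_zero, by rw [Polynomial.aeval_def, hφalg, ← Polynomial.eval_map]; exact hd0⟩
      have hmem : ∀ p : Polynomial K, (p.map φ).eval ρ ∈ algebraicClosure K L := by
        intro p
        have h1 : (p.map φ).eval ρ = Polynomial.aeval ρ p := by
          rw [Polynomial.aeval_def, hφalg, Polynomial.eval_map]
        rw [h1]
        have h2 : Polynomial.aeval ρ p ∈ Algebra.adjoin K ({ρ} : Set L) :=
          Polynomial.aeval_mem_adjoin_singleton K ρ
        have h3 : Algebra.adjoin K ({ρ} : Set L) ≤ (algebraicClosure K L).toSubalgebra :=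
          Algebra.adjoin_le (by simpa using hρA)
        exact h3 h2
      have hzA : z ∈ algebraicClosure K L := by
        have hzeq : z = -(f₁.map φ).eval ρ * ((g₁.map φ).eval ρ)⁻¹ := by
          rw [eq_mul_inv_iff_mul_eq₀ hcase]
          linear_combination hGρ
        rw [hzeq]
        exact mul_mem (neg_mem (hmem f₁)) (inv_mem (hmem g₁))
      exact hzt (mem_algebraicClosure_iff.mp hzA)
  -- conclude
  have hFilt : Filt = G := by
    show ((F.roots.filter fun ρ => (g.map φ).eval ρ ≠ 0).map
        fun ρ => Polynomial.X - Polynomial.C ρ).prod = G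
    rw [hroots, Multiset.filter_add, h1, h2, zero_add]
    exact ((IsAlgClosed.splits G).eq_prod_roots_of_monic hG).symm
  rw [hFilt, hFd]
end
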